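/- arXiv:1603.01182 — 2 statements merged into one kernel-verified Lean document; each statement's English description precedes it below -/
import Mathlib

section
/- Let X and X' be two trajectories of system X on the same graph with the same parameters (edge weights a_{ij}, labels, C, λ, ρ_i^c), and let κ > 0. If the initial vertex particle counts satisfy n'_i^c(0) = κ · n_i^c(0) for all vertices i and classes c (and both trajectories start with n_{ij}^c(0) = 0 and N_{ij}^c(0) = 0), then for every time t ≥ 0, every pair of vertices i, j, and every class c, one has n'_i^c(t) = κ · n_i^c(t), n'_{ij}^c(t) = κ · n_{ij}^c(t), and N'_{ij}^c(t) = κ · N_{ij}^c(t). In other words, system X has positive multiplicative scaling behavior of order 1. -/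
/-!
System X: a deterministic discrete-time particle-competition system on a finite
undirected graph with `C` classes, edge weights `a`, labels on a subset of
vertices, survival parameter `lam` and generation rates `ρ`.
-/

open Finset

/-- Parameters of system X: edge weights, labels (`none` = unlabeled),
the parameter `λ`, and the generation rates `ρ`. -/
structure SysParams (V : Type*) [Fintype V] (C : ℕ) where
  a : V → V → ℝ
  label : V → Option (Fin C)
  lam : ℝ
  ρ : V → Fin C → ℝ
  a_nonneg : ∀ i j, 0 ≤ a i j
  a_symm : ∀ i j, a i j = a j i
  deg_pos : ∀ i, 0 < ∑ j, a i j
  lam_nonneg : 0 ≤ lam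
  lam_le_one : lam ≤ 1
  ρ_nonneg : ∀ i c, 0 ≤ ρ i c
  C_pos : 0 < C

variable {V : Type*} [Fintype V] {C : ℕ}

/-- The submission level `S_{ij}^c` computed from cumulative edge dominations `Nd`. -/
noncomputable def submission (Nd : V → V → Fin C → ℝ) (i j : V) (c : Fin C) : ℝ :=
  if 0 < ∑ q, (Nd i j q + Nd j i q) then
    1 - (Nd i j c + Nd j i c) / ∑ q, (Nd i j q + Nd j i q)
  else 1 - 1 / C

/-- The transition function `P_{ij}^c`: zero into sinks of a rival class, otherwise
`(a_{ij}/d_i)(1 - λ S_{ij}^c)`. -/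
noncomputable def transition (P : SysParams V C) (Nd : V → V → Fin C → ℝ)
    (i j : V) (c : Fin C) : ℝ :=
  if ∀ y, P.label j = some y → y = c then
    (P.a i j / ∑ k, P.a i k) * (1 - P.lam * submission Nd i j c)
  else 0

/-- A state trajectory of system X: `n t i c` = class-`c` particles at vertex `i`,
`nij t i j c` = class-`c` particles that moved from `i` to `j` at time `t`,
`Nd t i j c` = cumulative class-`c` edge domination. -/
structure Traj (V : Type*) [Fintype V] (C : ℕ) where
  n : ℕ → V → Fin C → ℝ
  nij : ℕ → V → V → Fin C → ℝ
  Nd : ℕ → V → V → Fin C → ℝ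

/-- Total number of particles at time `t`. -/
noncomputable def Traj.total (X : Traj V C) (t : ℕ) : ℝ := ∑ i, ∑ c, X.n t i c

/-- `X` is a trajectory of system X with parameters `P`: the initial conditions
`n_{ij}^c(0) = 0`, `N_{ij}^c(0) = 0`, `n_i^c(0) ≥ 0` and the update equations hold. -/
noncomputable def IsTrajectory (P : SysParams V C) (X : Traj V C) : Prop :=
  (∀ i j c, X.nij 0 i j c = 0) ∧
  (∀ i j c, X.Nd 0 i j c = 0) ∧
  (∀ i c, 0 ≤ X.n 0 i c) ∧
  (∀ t i j c, X.nij (t + 1) i j c = X.n t i c * transition P (X.Nd t) i j c) ∧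
  (∀ t i c, X.n (t + 1) i c =
    (∑ j, X.nij (t + 1) j i c) + P.ρ i c * max 0 (X.total 0 - X.total t)) ∧
  (∀ t i j c, X.Nd (t + 1) i j c = X.Nd t i j c + X.nij (t + 1) i j c)

omit [Fintype V] in
theorem submission_smul {κ : ℝ} (hκ : 0 < κ) (Nd : V → V → Fin C → ℝ) :
    submission (κ • Nd) = submission Nd := by
  ext i j c
  have hsum : ∀ q, (κ • Nd) i j q + (κ • Nd) j i q = κ * (Nd i j q + Nd j i q) := fun q => by
    simp only [Pi.smul_apply, smul_eq_mul, mul_add]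
  simp only [submission, hsum, ← Finset.mul_sum, mul_pos_iff_of_pos_left hκ,
    mul_div_mul_left _ _ hκ.ne']

theorem transition_smul (P : SysParams V C) {κ : ℝ} (hκ : 0 < κ) (Nd : V → V → Fin C → ℝ) :
    transition P (κ • Nd) = transition P Nd := by
  ext i j c
  simp only [transition, submission_smul hκ]

theorem Traj.total_eq_mul_of_n_eq_smul {X X' : Traj V C} {κ : ℝ} {t : ℕ}
    (h : X'.n t = κ • X.n t) : X'.total t = κ * X.total t := by
  simp only [Traj.total, h, Pi.smul_apply, smul_eq_mul, ← Finset.mul_sum]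

def Traj.ScaledAt (κ : ℝ) (X X' : Traj V C) (t : ℕ) : Prop :=
  X'.n t = κ • X.n t ∧ X'.nij t = κ • X.nij t ∧ X'.Nd t = κ • X.Nd t

namespace IsTrajectory

variable {P : SysParams V C} {X X' : Traj V C} {κ : ℝ}

theorem scaledAt_zero (hX : IsTrajectory P X) (hX' : IsTrajectory P X')
    (h0 : X'.n 0 = κ • X.n 0) : Traj.ScaledAt κ X X' 0 := by
  refine ⟨h0, ?_, ?_⟩ <;> ext <;> simp [hX.1, hX.2.1, hX'.1, hX'.2.1]

/-- The transitions depend on `Nd` only through ratios, and the generation term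
`ρ · max 0 (n(0) - n(t))` is homogeneous of degree one because `κ ≥ 0`. -/
theorem scaledAt_succ (hκ : 0 < κ) (hX : IsTrajectory P X) (hX' : IsTrajectory P X')
    (h0 : X'.n 0 = κ • X.n 0) {t : ℕ} (ht : Traj.ScaledAt κ X X' t) :
    Traj.ScaledAt κ X X' (t + 1) := by
  obtain ⟨-, -, -, hnij, hn, hNd⟩ := hX
  obtain ⟨-, -, -, hnij', hn', hNd'⟩ := hX'
  obtain ⟨hnt, -, hNdt⟩ := ht
  have hnij_succ : X'.nij (t + 1) = κ • X.nij (t + 1) := by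
    ext i j c
    simp only [hnij', hnt, hNdt, transition_smul P hκ, Pi.smul_apply, smul_eq_mul, hnij,
      mul_assoc]
  have hgen : max 0 (X'.total 0 - X'.total t) = κ * max 0 (X.total 0 - X.total t) := by
    rw [Traj.total_eq_mul_of_n_eq_smul h0, Traj.total_eq_mul_of_n_eq_smul hnt, ← mul_sub,
      mul_max_of_nonneg _ _ hκ.le, mul_zero]
  refine ⟨?_, hnij_succ, ?_⟩ <;> ext
  · simp only [hn', hn, hgen, hnij_succ, Pi.smul_apply, smul_eq_mul, ← Finset.mul_sum]
    ring
  · simp only [hNd', hNd, hNdt, hnij_succ, Pi.smul_apply, smul_eq_mul, mul_add]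

end IsTrajectory

/-- **Lemma (scale invariance).** System X has positive multiplicative scaling
behavior of order 1: if two trajectories with the same parameters have initial
vertex particle counts related by `n'_i^c(0) = κ n_i^c(0)` with `κ > 0`, then all
state variables remain proportional with factor `κ` for all times. -/
theorem systemX_scale_invariance (P : SysParams V C) (X X' : Traj V C) (κ : ℝ)
    (hκ : 0 < κ) (hX : IsTrajectory P X) (hX' : IsTrajectory P X')
    (h0 : ∀ i c, X'.n 0 i c = κ * X.n 0 i c) :
    ∀ t (i j : V) (c : Fin C),
      X'.n t i c = κ * X.n t i c ∧
      X'.nij t i j c = κ * X.nij t i j c ∧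
      X'.Nd t i j c = κ * X.Nd t i j c := by
  have h0' : X'.n 0 = κ • X.n 0 := funext₂ h0
  have hscaled : ∀ t, Traj.ScaledAt κ X X' t := fun t => by
    induction t with
    | zero => exact IsTrajectory.scaledAt_zero hX hX' h0'
    | succ t ih => exact IsTrajectory.scaledAt_succ hκ hX hX' h0' ih
  intro t i j c
  obtain ⟨hn, hnij, hNd⟩ := hscaled t
  exact ⟨congrFun₂ hn i c, congrFun₃ hnij i j c, congrFun₃ hNd i j c⟩
end

section
/- One-step homogeneity of system X: let X and X' be two trajectories of system X on the same graph with the same parameters, with n'(0) = κ · n(0) for some κ > 0 (where n(0) denotes the total initial particle count). Suppose that at some time t ≥ 0 the states satisfy n'_i^c(t) = κ · n_i^c(t), n'_{ij}^c(t) = κ · n_{ij}^c(t), and N'_{ij}^c(t) = κ · N_{ij}^c(t) for all i, j, c. Then the same three proportionality relations hold at time t + 1. -/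
/-!
System X: a deterministic discrete-time particle-competition system on a finite
undirected graph with `C` classes, edge weights `a`, labels on a subset of
vertices, survival parameter `lam` and generation rates `ρ`.
-/

open Finset

variable {V : Type*} [Fintype V] {C : ℕ}

/-!
All update rules of system X are positively homogeneous of degree one in the state, except the
transition probabilities, which depend on the cumulative dominations `N` only through the ratios
in the submission level and are therefore invariant under `N ↦ κ N` for `κ > 0`. Scaling the
state at time `t` by `κ` thus scales every product and sum forming the state at time `t + 1`.
-/

theorem submission_const_mul {V : Type*} {C : ℕ} {κ : ℝ} (hκ : 0 < κ) (Nd : V → V → Fin C → ℝ) :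
    submission (fun i j c => κ * Nd i j c) = submission Nd := by
  funext i j c
  simp only [submission, ← mul_add, ← mul_sum, mul_pos_iff_of_pos_left hκ,
    mul_div_mul_left _ _ hκ.ne']

theorem transition_const_mul {κ : ℝ} (hκ : 0 < κ) (P : SysParams V C) (Nd : V → V → Fin C → ℝ) :
    transition P (fun i j c => κ * Nd i j c) = transition P Nd := by
  funext i j c
  simp only [transition, submission_const_mul hκ]

theorem Traj.total_eq_mul {X X' : Traj V C} {κ : ℝ} {t : ℕ}
    (hn : ∀ i c, X'.n t i c = κ * X.n t i c) : X'.total t = κ * X.total t := by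
  simp only [Traj.total, hn, mul_sum]

theorem systemX_one_step_homogeneity_general (P : SysParams V C) (X X' : Traj V C) (κ : ℝ)
    (hκ : 0 < κ) (hX : IsTrajectory P X) (hX' : IsTrajectory P X')
    (h0 : X'.total 0 = κ * X.total 0) (t : ℕ)
    (hn : ∀ i c, X'.n t i c = κ * X.n t i c)
    (hNd : ∀ i j c, X'.Nd t i j c = κ * X.Nd t i j c) :
    (∀ i c, X'.n (t + 1) i c = κ * X.n (t + 1) i c) ∧
    (∀ i j c, X'.nij (t + 1) i j c = κ * X.nij (t + 1) i j c) ∧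
    (∀ i j c, X'.Nd (t + 1) i j c = κ * X.Nd (t + 1) i j c) := by
  obtain ⟨-, -, -, hmove, hgen, hacc⟩ := hX
  obtain ⟨-, -, -, hmove', hgen', hacc'⟩ := hX'
  have htrans : transition P (X'.Nd t) = transition P (X.Nd t) := by
    rw [← transition_const_mul hκ P (X.Nd t)]
    exact congrArg _ (funext fun i => funext fun j => funext (hNd i j))
  have hnij : ∀ i j c, X'.nij (t + 1) i j c = κ * X.nij (t + 1) i j c := by
    intro i j c
    rw [hmove', hmove, htrans, hn, mul_assoc]
  refine ⟨fun i c => ?_, hnij, fun i j c => ?_⟩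
  · have hgap : max 0 (X'.total 0 - X'.total t) = κ * max 0 (X.total 0 - X.total t) := by
      rw [h0, Traj.total_eq_mul hn, ← mul_sub, mul_max_of_nonneg _ _ hκ.le, mul_zero]
    rw [hgen', hgen, hgap, mul_add, mul_sum, mul_left_comm]
    simp only [hnij]
  · rw [hacc', hacc, hnij, hNd, mul_add]

/-- **One-step homogeneity of system X.** If two trajectories with the same
parameters have proportional total initial particle counts `n'(0) = κ n(0)` with
`κ > 0`, and at time `t` all state variables are proportional with factor `κ`,
then they are still proportional with factor `κ` at time `t + 1`. -/
theorem systemX_one_step_homogeneity (P : SysParams V C) (X X' : Traj V C) (κ : ℝ)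
    (hκ : 0 < κ) (hX : IsTrajectory P X) (hX' : IsTrajectory P X')
    (h0 : X'.total 0 = κ * X.total 0) (t : ℕ)
    (hn : ∀ i c, X'.n t i c = κ * X.n t i c)
    (hnij : ∀ i j c, X'.nij t i j c = κ * X.nij t i j c)
    (hNd : ∀ i j c, X'.Nd t i j c = κ * X.Nd t i j c) :
    (∀ i c, X'.n (t + 1) i c = κ * X.n (t + 1) i c) ∧
    (∀ i j c, X'.nij (t + 1) i j c = κ * X.nij (t + 1) i j c) ∧
    (∀ i j c, X'.Nd (t + 1) i j c = κ * X.Nd (t + 1) i j c) :=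
  systemX_one_step_homogeneity_general P X X' κ hκ hX hX' h0 t hn hNd
end
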